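/- Let n be a positive integer divisible by 8, let C be a singly-even self-dual binary code of length n, and let C_max be its maximal doubly-even subcode (of dimension n/2 − 1). Then there exist exactly two doubly-even self-dual codes of length n containing C_max; moreover, every self-dual code of length n containing C_max is equal to C or to one of these two doubly-even codes, so the self-dual codes containing C_max form a set of exactly three codes which are pairwise neighbors. -/

import Mathlib

open Finset

/-- Hamming weight of a binary vector. -/
def wt {n : ℕ} (a : Fin n → ZMod 2) : ℕ :=
  (Finset.univ.filter fun i => a i ≠ 0).card

/-- Number of coordinates where both vectors are 1. -/
def mu {n : ℕ} (a b : Fin n → ZMod 2) : ℕ :=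
  (Finset.univ.filter fun i => a i = 1 ∧ b i = 1).card

/-- The dual code with respect to the standard inner product over F_2. -/
def dualCode {n : ℕ} (C : Submodule (ZMod 2) (Fin n → ZMod 2)) :
    Submodule (ZMod 2) (Fin n → ZMod 2) where
  carrier := {x | ∀ c ∈ C, ∑ i, x i * c i = 0}
  zero_mem' := by intro c hc; simp
  add_mem' := by
    intro x y hx hy c hc
    simp [add_mul, Finset.sum_add_distrib, hx c hc, hy c hc]
  smul_mem' := by
    intro r x hx c hc
    simp [mul_assoc, ← Finset.mul_sum, hx c hc]

def IsSelfDual {n : ℕ} (C : Submodule (ZMod 2) (Fin n → ZMod 2)) : Prop :=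
  C = dualCode C

def DoublyEven {n : ℕ} (C : Submodule (ZMod 2) (Fin n → ZMod 2)) : Prop :=
  ∀ c ∈ C, 4 ∣ wt c

def SinglyEven {n : ℕ} (C : Submodule (ZMod 2) (Fin n → ZMod 2)) : Prop :=
  ∃ c ∈ C, ¬ 4 ∣ wt c

/-- Minimum distance: smallest nonzero weight of a codeword. -/
noncomputable def minDist {n : ℕ} (C : Submodule (ZMod 2) (Fin n → ZMod 2)) : ℕ :=
  sInf {d | ∃ c ∈ C, c ≠ 0 ∧ wt c = d}

/-!
Let `P = Cmax^⊥`. As `Cmax` has codimension one in `C`, the quotient `P / Cmax` is a plane, so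
`P` is the union of the four cosets of `Cmax` represented by `0`, `c`, `y`, `c + y`, where
`c ∈ C \ Cmax` and `y ∈ P \ C`; the self-dual codes containing `Cmax` are the three codes
`Cmax + ⟨v⟩` with `v ∈ {c, y, c + y}`. Weights are constant mod 4 on each coset, so the Gauss
sum `∑_{x ∈ P} i^{wt x}` equals `|Cmax| (1 + i^{wt c} + i^{wt y} + i^{wt (c + y)})
= |Cmax| (i^{wt y} + i^{wt (c + y)})`. Poisson summation over the doubly-even code `Cmax` shows
that the same sum is `(1 + i)^n`, which for `8 ∣ n` is the positive real `16^{n/8}`. This forces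
`wt y ≡ wt (c + y) ≡ 0 mod 4`.
-/

open Matrix Module Submodule

section Weights

variable {n : ℕ}

lemma wt_eq_sum_val (x : Fin n → ZMod 2) : wt x = ∑ i, (x i).val := by
  rw [wt, card_filter]
  refine sum_congr rfl fun i _ => ?_
  generalize x i = a
  revert a
  decide

lemma mu_eq_sum_val (x y : Fin n → ZMod 2) : mu x y = ∑ i, (x i * y i).val := by
  rw [mu, card_filter]
  refine sum_congr rfl fun i _ => ?_
  generalize x i = a
  generalize y i = b
  revert a b
  decide

lemma wt_add_add_two_mul_mu (x y : Fin n → ZMod 2) : wt (x + y) + 2 * mu x y = wt x + wt y := by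
  simp only [wt_eq_sum_val, mu_eq_sum_val, mul_sum, ← sum_add_distrib, Pi.add_apply]
  refine sum_congr rfl fun i _ => ?_
  generalize x i = a
  generalize y i = b
  revert a b
  decide

lemma mu_self (x : Fin n → ZMod 2) : mu x x = wt x := by
  simp only [wt_eq_sum_val, mu_eq_sum_val]
  refine sum_congr rfl fun i _ => ?_
  generalize x i = a
  revert a
  decide

lemma wt_one : wt (1 : Fin n → ZMod 2) = n := by
  simp [wt_eq_sum_val, ZMod.val_one]

lemma dotProduct_eq_mu (x y : Fin n → ZMod 2) : x ⬝ᵥ y = mu x y := by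
  simp [mu_eq_sum_val, dotProduct]

lemma dotProduct_one_eq_wt (x : Fin n → ZMod 2) : x ⬝ᵥ 1 = wt x := by
  simp [wt_eq_sum_val, dotProduct_one]

lemma dotProduct_self_eq_zero_iff (x : Fin n → ZMod 2) : x ⬝ᵥ x = 0 ↔ 2 ∣ wt x := by
  rw [dotProduct_eq_mu, mu_self, ZMod.natCast_eq_zero_iff]

lemma wt_add_modEq {x z : Fin n → ZMod 2} (hz : 4 ∣ wt z) (hxz : x ⬝ᵥ z = 0) :
    wt (x + z) ≡ wt x [MOD 4] := by
  rw [dotProduct_eq_mu, ZMod.natCast_eq_zero_iff] at hxz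
  have := wt_add_add_two_mul_mu x z
  unfold Nat.ModEq
  omega

end Weights

section ZModTwoModule

variable {V : Type*} [AddCommGroup V] [Module (ZMod 2) V] {A D : Submodule (ZMod 2) V}
  {u v w x : V}

lemma mem_sup_span_singleton_iff : x ∈ A ⊔ ZMod 2 ∙ v ↔ x ∈ A ∨ x - v ∈ A := by
  simp only [Submodule.mem_sup, mem_span_singleton]
  constructor
  · rintro ⟨a, ha, _, ⟨t, rfl⟩, rfl⟩
    obtain rfl | rfl : t = 0 ∨ t = 1 := by revert t; decide
    all_goals simp [ha]
  · rintro (hx | hx)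
    · exact ⟨x, hx, 0, ⟨0, zero_smul _ _⟩, add_zero x⟩
    · exact ⟨x - v, hx, v, ⟨1, one_smul _ _⟩, sub_add_cancel x v⟩

lemma sup_span_singleton_eq_of_sub_mem (h : u - w ∈ A) :
    A ⊔ ZMod 2 ∙ u = A ⊔ ZMod 2 ∙ w := by
  have key : ∀ {u w : V}, u - w ∈ A → A ⊔ ZMod 2 ∙ u ≤ A ⊔ ZMod 2 ∙ w :=
    fun h => sup_le le_sup_left <| (span_singleton_le_iff_mem _ _).2 <|
      mem_sup_span_singleton_iff.2 (Or.inr h)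
  exact le_antisymm (key h) (key (by rwa [← neg_mem_iff, neg_sub]))

lemma sup_span_singleton_inf_sup_span_singleton (h : u - w ∉ A) :
    (A ⊔ ZMod 2 ∙ u) ⊓ (A ⊔ ZMod 2 ∙ w) = A := by
  refine le_antisymm (fun x hx => ?_) (le_inf le_sup_left le_sup_left)
  obtain ⟨hxu, hxw⟩ := mem_inf.1 hx
  rcases mem_sup_span_singleton_iff.1 hxu with hx | hxu
  · exact hx
  rcases mem_sup_span_singleton_iff.1 hxw with hx | hxw
  · exact hx
  exact absurd (by simpa using A.sub_mem hxw hxu) h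

lemma sup_span_singleton_ne (hu : u ∉ A) (h : u - w ∉ A) :
    A ⊔ ZMod 2 ∙ u ≠ A ⊔ ZMod 2 ∙ w := by
  intro heq
  have := sup_span_singleton_inf_sup_span_singleton h
  rw [← heq, inf_idem] at this
  exact hu (this ▸ mem_sup_right (mem_span_singleton_self u))

variable [FiniteDimensional (ZMod 2) V]

lemma eq_sup_span_singleton_of_finrank_le (hAD : A ≤ D)
    (hfin : finrank (ZMod 2) D ≤ finrank (ZMod 2) A + 1)
    (hv : v ∈ D) (hvA : v ∉ A) : D = A ⊔ ZMod 2 ∙ v :=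
  (eq_of_le_of_finrank_le (sup_le hAD ((span_singleton_le_iff_mem _ _).2 hv))
    (by rwa [finrank_sup_span_singleton hvA])).symm

lemma eq_sup_span_singleton_of_le_sup_sup (hAD : A ≤ D)
    (hfin : finrank (ZMod 2) D = finrank (ZMod 2) A + 1)
    (hD : D ≤ A ⊔ ZMod 2 ∙ u ⊔ ZMod 2 ∙ v) :
    D = A ⊔ ZMod 2 ∙ u ∨ D = A ⊔ ZMod 2 ∙ v ∨ D = A ⊔ ZMod 2 ∙ (u + v) := by
  obtain ⟨d, hdD, hdA⟩ := SetLike.exists_of_lt (lt_of_le_of_ne hAD fun h => by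
    rw [h] at hfin; omega)
  rw [eq_sup_span_singleton_of_finrank_le hAD hfin.le hdD hdA]
  rcases mem_sup_span_singleton_iff.1 (hD hdD) with hd | hd <;>
    rcases mem_sup_span_singleton_iff.1 hd with hd | hd
  · exact absurd hd hdA
  · exact Or.inl (sup_span_singleton_eq_of_sub_mem hd)
  · exact Or.inr (Or.inl (sup_span_singleton_eq_of_sub_mem hd))
  · exact Or.inr (Or.inr (sup_span_singleton_eq_of_sub_mem (by rwa [sub_sub, add_comm] at hd)))

lemma exists_eq_sup_span_singleton_sup (hAD : A ≤ D)
    (hfin : finrank (ZMod 2) D = finrank (ZMod 2) A + 2) (hu : u ∈ D) (huA : u ∉ A) :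
    ∃ v ∈ D, v ∉ A ⊔ ZMod 2 ∙ u ∧ D = A ⊔ ZMod 2 ∙ u ⊔ ZMod 2 ∙ v := by
  have hAuD : A ⊔ ZMod 2 ∙ u ≤ D := sup_le hAD ((span_singleton_le_iff_mem _ _).2 hu)
  have hfinu := finrank_sup_span_singleton (K := ZMod 2) huA
  obtain ⟨v, hvD, hvAu⟩ := SetLike.exists_of_lt (lt_of_le_of_ne hAuD fun h => by
    rw [h] at hfinu; omega)
  exact ⟨v, hvD, hvAu, eq_sup_span_singleton_of_finrank_le hAuD (by omega) hvD hvAu⟩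

end ZModTwoModule

section DualCode

variable {n : ℕ} {A B C : Submodule (ZMod 2) (Fin n → ZMod 2)} {v x : Fin n → ZMod 2}

lemma mem_dualCode : x ∈ dualCode A ↔ ∀ c ∈ A, x ⬝ᵥ c = 0 := Iff.rfl

lemma dualCode_anti (h : A ≤ B) : dualCode B ≤ dualCode A := fun _ hx c hc => hx c (h hc)

lemma dualCode_eq_orthogonal (A : Submodule (ZMod 2) (Fin n → ZMod 2)) :
    dualCode A = (toBilin' (1 : Matrix (Fin n) (Fin n) (ZMod 2))).orthogonal A := by
  ext x
  simp [mem_dualCode, LinearMap.BilinForm.mem_orthogonal_iff, toBilin'_apply', dotProduct_comm]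

lemma finrank_dualCode (A : Submodule (ZMod 2) (Fin n → ZMod 2)) :
    finrank (ZMod 2) (dualCode A) = n - finrank (ZMod 2) A := by
  rw [dualCode_eq_orthogonal, LinearMap.BilinForm.finrank_orthogonal
    (LinearMap.BilinForm.nondegenerate_toBilin'_of_det_ne_zero' _ (by simp)), finrank_fin_fun]

lemma IsSelfDual.two_mul_finrank (hC : IsSelfDual C) : 2 * finrank (ZMod 2) C = n := by
  have h := finrank_dualCode C
  have hle := C.finrank_le
  rw [← hC] at h
  rw [finrank_fin_fun] at hle
  omega

lemma isSelfDual_of_le_dualCode (h : C ≤ dualCode C) (hC : 2 * finrank (ZMod 2) C = n) :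
    IsSelfDual C :=
  eq_of_le_of_finrank_eq h (by rw [finrank_dualCode]; omega)

lemma two_dvd_wt_of_mem_isSelfDual (hC : IsSelfDual C) (hx : x ∈ C) : 2 ∣ wt x :=
  (dotProduct_self_eq_zero_iff x).1 ((hC ▸ hx : x ∈ dualCode C) x hx)

lemma one_mem_of_isSelfDual (hC : IsSelfDual C) : (1 : Fin n → ZMod 2) ∈ C := by
  rw [hC, mem_dualCode]
  intro c hc
  rw [dotProduct_comm, dotProduct_one_eq_wt, ZMod.natCast_eq_zero_iff]
  exact two_dvd_wt_of_mem_isSelfDual hC hc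

lemma two_dvd_wt_of_mem_dualCode (h1 : (1 : Fin n → ZMod 2) ∈ A) (hx : x ∈ dualCode A) :
    2 ∣ wt x := by
  rw [← ZMod.natCast_eq_zero_iff, ← dotProduct_one_eq_wt]
  exact hx 1 h1

lemma mem_dualCode_sup_span_singleton :
    x ∈ dualCode (A ⊔ ZMod 2 ∙ v) ↔ x ∈ dualCode A ∧ x ⬝ᵥ v = 0 := by
  refine ⟨fun hx => ⟨dualCode_anti le_sup_left hx,
      hx v (mem_sup_right (mem_span_singleton_self v))⟩,
    fun ⟨hxA, hxv⟩ => mem_dualCode.2 fun c hc => ?_⟩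
  obtain ⟨a, ha, _, hb, rfl⟩ := Submodule.mem_sup.1 hc
  obtain ⟨t, rfl⟩ := mem_span_singleton.1 hb
  rw [dotProduct_add, dotProduct_smul, mem_dualCode.1 hxA a ha, hxv, smul_zero, add_zero]

lemma isSelfDual_sup_span_singleton (hA : A ≤ dualCode A) (hv : v ∈ dualCode A)
    (hvv : 2 ∣ wt v) (hvA : v ∉ A) (hfin : 2 * (finrank (ZMod 2) A + 1) = n) :
    IsSelfDual (A ⊔ ZMod 2 ∙ v) := by
  refine isSelfDual_of_le_dualCode (sup_le (fun a ha => ?_) ?_) ?_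
  · exact mem_dualCode_sup_span_singleton.2
      ⟨hA ha, by rw [dotProduct_comm]; exact mem_dualCode.1 hv a ha⟩
  · exact (span_singleton_le_iff_mem _ _).2
      (mem_dualCode_sup_span_singleton.2 ⟨hv, (dotProduct_self_eq_zero_iff v).2 hvv⟩)
  · rwa [finrank_sup_span_singleton hvA]

lemma doublyEven_sup_span_singleton (hA : DoublyEven A) (hv : v ∈ dualCode A) (hv4 : 4 ∣ wt v) :
    DoublyEven (A ⊔ ZMod 2 ∙ v) := by
  intro x hx
  rcases mem_sup_span_singleton_iff.1 hx with hxA | hxA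
  · exact hA x hxA
  · have h := wt_add_modEq (hA _ hxA) (mem_dualCode.1 hv _ hxA)
    rw [add_sub_cancel] at h
    exact Nat.modEq_zero_iff_dvd.1 (h.trans (Nat.modEq_zero_iff_dvd.2 hv4))

lemma IsSelfDual.eq_sup_span_singleton_of_le {D : Submodule (ZMod 2) (Fin n → ZMod 2)}
    {u v : Fin n → ZMod 2} (hD : IsSelfDual D) (hAD : A ≤ D)
    (hfin : 2 * (finrank (ZMod 2) A + 1) = n)
    (hP : dualCode A = A ⊔ ZMod 2 ∙ u ⊔ ZMod 2 ∙ v) :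
    D = A ⊔ ZMod 2 ∙ u ∨ D = A ⊔ ZMod 2 ∙ v ∨ D = A ⊔ ZMod 2 ∙ (u + v) :=
  eq_sup_span_singleton_of_le_sup_sup hAD (by have := hD.two_mul_finrank; omega)
    (hP ▸ fun _ hx => dualCode_anti hAD (le_of_eq hD hx))

end DualCode

section Codewords

variable {V : Type*} [AddCommGroup V] [Module (ZMod 2) V] [Fintype V]
  {A : Submodule (ZMod 2) V} {v x : V}

noncomputable def codewords (A : Submodule (ZMod 2) V) : Finset V := by
  classical exact univ.filter (· ∈ A)

lemma mem_codewords : x ∈ codewords A ↔ x ∈ A := by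
  simp [codewords]

lemma sum_codewords_add_right {M : Type*} [AddCommMonoid M] (hv : v ∈ A) (f : V → M) :
    ∑ a ∈ codewords A, f (a + v) = ∑ a ∈ codewords A, f a :=
  sum_nbij' (· + v) (· - v) (fun a ha => mem_codewords.2 (A.add_mem (mem_codewords.1 ha) hv))
    (fun a ha => mem_codewords.2 (A.sub_mem (mem_codewords.1 ha) hv)) (by simp) (by simp)
    (fun _ _ => rfl)

lemma sum_codewords_sup_span_singleton {M : Type*} [AddCommMonoid M] (hv : v ∉ A) (f : V → M) :
    ∑ x ∈ codewords (A ⊔ ZMod 2 ∙ v), f x = ∑ a ∈ codewords A, (f a + f (a + v)) := by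
  classical
  have hunion : codewords (A ⊔ ZMod 2 ∙ v) =
      codewords A ∪ (codewords A).map (addRightEmbedding v) := by
    ext x
    simp [mem_codewords, mem_sup_span_singleton_iff, ← eq_sub_iff_add_eq]
  have hdisj : Disjoint (codewords A) ((codewords A).map (addRightEmbedding v)) := by
    simp only [disjoint_left, mem_map, addRightEmbedding_apply, mem_codewords]
    rintro _ hx ⟨a, ha, rfl⟩
    exact hv (by simpa using A.sub_mem hx ha)
  rw [hunion, sum_union hdisj, sum_map, sum_add_distrib]
  rfl

end Codewords

section GaussSum

open Complex

variable {n : ℕ} {A : Submodule (ZMod 2) (Fin n → ZMod 2)}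

lemma neg_one_pow_mu (x y : Fin n → ZMod 2) :
    (-1 : ℂ) ^ mu x y = AddChar.zmodChar 2 (neg_one_sq (R := ℂ)) (x ⬝ᵥ y) := by
  rw [dotProduct_eq_mu, AddChar.zmodChar_apply']

open Classical in
lemma sum_codewords_neg_one_pow_mu (x : Fin n → ZMod 2) :
    ∑ c ∈ codewords A, (-1 : ℂ) ^ mu x c =
      if x ∈ dualCode A then (#(codewords A) : ℂ) else 0 := by
  simp only [neg_one_pow_mu]
  set ψ := AddChar.zmodChar 2 (neg_one_sq (R := ℂ))
  split_ifs with hx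
  · rw [sum_congr rfl fun c hc => by rw [mem_dualCode.1 hx c (mem_codewords.1 hc),
      AddChar.map_zero_eq_one], sum_const, nsmul_one]
  · obtain ⟨c₀, hc₀, hxc₀⟩ : ∃ c₀ ∈ A, x ⬝ᵥ c₀ ≠ 0 := by
      simpa [mem_dualCode] using hx
    have hψ : ψ (x ⬝ᵥ c₀) = -1 := by
      rw [show x ⬝ᵥ c₀ = 1 by revert hxc₀; generalize x ⬝ᵥ c₀ = a; revert a; decide]
      rw [AddChar.zmodChar_apply, show (1 : ZMod 2).val = 1 from rfl, pow_one]
    have hshift := sum_codewords_add_right hc₀ fun c => ψ (x ⬝ᵥ c)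
    simp only [dotProduct_add, AddChar.map_add_eq_mul, hψ, mul_neg_one, sum_neg_distrib] at hshift
    exact CharZero.neg_eq_self_iff.1 hshift

lemma sum_I_pow_val_mul_neg_one_pow_val (b : ZMod 2) :
    ∑ a : ZMod 2, I ^ a.val * (-1 : ℂ) ^ (a * b).val = (1 + I) * (-I) ^ b.val := by
  have hval : (1 : ZMod 2).val = 1 := rfl
  rw [show (univ : Finset (ZMod 2)) = {0, 1} from rfl]
  obtain rfl | rfl : b = 0 ∨ b = 1 := by revert b; decide
  · simp [hval]
  · simp [hval]
    linear_combination I_sq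

lemma sum_I_pow_wt_mul_neg_one_pow_mu (c : Fin n → ZMod 2) :
    ∑ x : Fin n → ZMod 2, I ^ wt x * (-1 : ℂ) ^ mu x c = (1 + I) ^ n * (-I) ^ wt c :=
  calc ∑ x : Fin n → ZMod 2, I ^ wt x * (-1 : ℂ) ^ mu x c
      = ∑ x : Fin n → ZMod 2, ∏ i, I ^ (x i).val * (-1 : ℂ) ^ (x i * c i).val := by
        simp only [wt_eq_sum_val, mu_eq_sum_val, ← prod_pow_eq_pow_sum, prod_mul_distrib]
    _ = ∏ i, ∑ a : ZMod 2, I ^ a.val * (-1 : ℂ) ^ (a * c i).val := by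
        rw [Fintype.prod_sum]
    _ = (1 + I) ^ n * (-I) ^ wt c := by
        simp only [sum_I_pow_val_mul_neg_one_pow_val, prod_mul_distrib, prod_const, card_univ,
          Fintype.card_fin, prod_pow_eq_pow_sum, wt_eq_sum_val]

lemma neg_I_pow_of_four_dvd {w : ℕ} (hw : 4 ∣ w) : (-I) ^ w = 1 := by
  obtain ⟨k, rfl⟩ := hw
  rw [pow_mul, neg_pow, I_pow_four]
  norm_num

lemma I_pow_of_four_dvd {w : ℕ} (hw : 4 ∣ w) : I ^ w = 1 := by
  obtain ⟨k, rfl⟩ := hw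
  rw [pow_mul, I_pow_four, one_pow]

theorem sum_codewords_dualCode_I_pow_wt (hA : DoublyEven A) :
    ∑ x ∈ codewords (dualCode A), I ^ wt x = (1 + I) ^ n := by
  have hcard : (#(codewords A) : ℂ) ≠ 0 :=
    Nat.cast_ne_zero.2 (card_ne_zero.2 ⟨0, mem_codewords.2 A.zero_mem⟩)
  refine mul_left_cancel₀ hcard ?_
  calc (#(codewords A) : ℂ) * ∑ x ∈ codewords (dualCode A), I ^ wt x
      = ∑ x, I ^ wt x * ∑ c ∈ codewords A, (-1 : ℂ) ^ mu x c := by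
        simp only [sum_codewords_neg_one_pow_mu, mul_ite, mul_zero, ← sum_filter, mul_sum,
          mul_comm _ (#(codewords A) : ℂ)]
        rfl
    _ = ∑ c ∈ codewords A, ∑ x, I ^ wt x * (-1 : ℂ) ^ mu x c := by
        simp only [mul_sum]
        exact sum_comm
    _ = ∑ c ∈ codewords A, (1 + I) ^ n := sum_congr rfl fun c hc => by
        rw [sum_I_pow_wt_mul_neg_one_pow_mu, neg_I_pow_of_four_dvd (hA c (mem_codewords.1 hc)),
          mul_one]
    _ = #(codewords A) * (1 + I) ^ n := by rw [sum_const, nsmul_eq_mul]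

lemma I_pow_wt_add_of_mem (hA : DoublyEven A) {z x : Fin n → ZMod 2} (hz : z ∈ A)
    (hx : x ∈ dualCode A) : I ^ wt (z + x) = I ^ wt x := by
  rw [pow_eq_pow_mod _ I_pow_four, add_comm, wt_add_modEq (hA z hz) (hx z hz),
    ← pow_eq_pow_mod _ I_pow_four]

lemma sum_codewords_sup_sup_I_pow_wt (hA : DoublyEven A) {u v : Fin n → ZMod 2}
    (hu : u ∈ dualCode A) (hv : v ∈ dualCode A) (huA : u ∉ A)
    (hvA : v ∉ A ⊔ ZMod 2 ∙ u) :
    ∑ x ∈ codewords (A ⊔ ZMod 2 ∙ u ⊔ ZMod 2 ∙ v), I ^ wt x =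
      #(codewords A) * (1 + I ^ wt u + I ^ wt v + I ^ wt (u + v)) := by
  have hcoset : ∀ r ∈ dualCode A,
      ∑ a ∈ codewords A, I ^ wt (a + r) = #(codewords A) * I ^ wt r := fun r hr => by
    rw [sum_congr rfl fun a ha => I_pow_wt_add_of_mem hA (mem_codewords.1 ha) hr, sum_const,
      nsmul_eq_mul]
  have hzero : ∑ a ∈ codewords A, I ^ wt a = #(codewords A) := by
    rw [sum_congr rfl fun a ha => I_pow_of_four_dvd (hA a (mem_codewords.1 ha)), sum_const,
      nsmul_one]
  simp only [sum_codewords_sup_span_singleton hvA, sum_codewords_sup_span_singleton huA,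
    sum_add_distrib, add_assoc, hzero, hcoset u hu, hcoset v hv, hcoset _ (add_mem hu hv)]
  ring

lemma four_dvd_of_mul_I_pow_add_I_pow_eq {m a b k : ℕ} (ha : 2 ∣ a) (hb : 2 ∣ b)
    (h : (m : ℂ) * (I ^ a + I ^ b) = (1 + I) ^ (8 * k)) : 4 ∣ a ∧ 4 ∣ b := by
  obtain ⟨p, rfl⟩ := ha
  obtain ⟨q, rfl⟩ := hb
  have h16 : (1 + I) ^ 8 = 16 := by
    rw [show 8 = 2 * 4 from rfl, pow_mul, show (1 + I) ^ 2 = 2 * I by linear_combination I_sq,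
      mul_pow, I_pow_four]
    norm_num
  rw [pow_mul, pow_mul, pow_mul, I_sq, h16] at h
  have hz : (m : ℤ) * ((-1) ^ p + (-1) ^ q) = 16 ^ k := by exact_mod_cast h
  have h16pos : (0 : ℤ) < 16 ^ k := by positivity
  rcases Nat.even_or_odd p with hp | hp <;> rcases Nat.even_or_odd q with hq | hq <;>
    simp only [hp.neg_one_pow, hq.neg_one_pow] at hz
  · obtain ⟨r, rfl⟩ := hp
    obtain ⟨s, rfl⟩ := hq
    omega
  all_goals nlinarith

theorem four_dvd_wt_of_dualCode_eq_sup_sup (h8 : 8 ∣ n) (hA : DoublyEven A)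
    (h1 : (1 : Fin n → ZMod 2) ∈ A) {c y : Fin n → ZMod 2}
    (hP : dualCode A = A ⊔ ZMod 2 ∙ c ⊔ ZMod 2 ∙ y) (hc : ¬ 4 ∣ wt c)
    (hcA : c ∉ A) (hyA : y ∉ A ⊔ ZMod 2 ∙ c) :
    4 ∣ wt y ∧ 4 ∣ wt (c + y) := by
  have hcP : c ∈ dualCode A := hP ▸ mem_sup_left (mem_sup_right (mem_span_singleton_self c))
  have hyP : y ∈ dualCode A := hP ▸ mem_sup_right (mem_span_singleton_self y)
  have hIc : I ^ wt c = -1 := by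
    have := two_dvd_wt_of_mem_dualCode h1 hcP
    rw [pow_eq_pow_mod _ I_pow_four, show wt c % 4 = 2 by omega, I_sq]
  have hgauss := sum_codewords_dualCode_I_pow_wt hA
  rw [hP, sum_codewords_sup_sup_I_pow_wt hA hcP hyP hcA hyA, hIc] at hgauss
  obtain ⟨k, rfl⟩ := h8
  exact four_dvd_of_mul_I_pow_add_I_pow_eq (m := #(codewords A)) (k := k)
    (two_dvd_wt_of_mem_dualCode h1 hyP)
    (two_dvd_wt_of_mem_dualCode h1 (add_mem hcP hyP)) (by linear_combination hgauss)

end GaussSum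

theorem neighborhood_of_typeI_general {n : ℕ} (h8 : 8 ∣ n)
    (C Cmax : Submodule (ZMod 2) (Fin n → ZMod 2))
    (hsd : IsSelfDual C) (hse : SinglyEven C)
    (hmax : (Cmax : Set (Fin n → ZMod 2)) = {c | c ∈ C ∧ 4 ∣ wt c})
    (hdim : Module.finrank (ZMod 2) Cmax = n / 2 - 1) :
    ∃ C2 C3 : Submodule (ZMod 2) (Fin n → ZMod 2),
      C2 ≠ C3 ∧
      IsSelfDual C2 ∧ DoublyEven C2 ∧ Cmax ≤ C2 ∧
      IsSelfDual C3 ∧ DoublyEven C3 ∧ Cmax ≤ C3 ∧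
      (∀ D : Submodule (ZMod 2) (Fin n → ZMod 2),
        IsSelfDual D → DoublyEven D → Cmax ≤ D → D = C2 ∨ D = C3) ∧
      (∀ D : Submodule (ZMod 2) (Fin n → ZMod 2),
        IsSelfDual D → Cmax ≤ D → D = C ∨ D = C2 ∨ D = C3) ∧
      Module.finrank (ZMod 2) ↥(C ⊓ C2) = n / 2 - 1 ∧
      Module.finrank (ZMod 2) ↥(C ⊓ C3) = n / 2 - 1 ∧
      Module.finrank (ZMod 2) ↥(C2 ⊓ C3) = n / 2 - 1 := by
  have hmem : ∀ x, x ∈ Cmax ↔ x ∈ C ∧ 4 ∣ wt x := fun x => Set.ext_iff.1 hmax x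
  have hCmaxC : Cmax ≤ C := fun x hx => ((hmem x).1 hx).1
  have hde : DoublyEven Cmax := fun x hx => ((hmem x).1 hx).2
  obtain ⟨c, hcC, hc⟩ := hse
  have hcCmax : c ∉ Cmax := fun h => hc ((hmem c).1 h).2
  have hlt := finrank_lt_finrank_of_lt (lt_of_le_of_ne hCmaxC fun h => hcCmax (h ▸ hcC))
  have hfin : 2 * (finrank (ZMod 2) Cmax + 1) = n := by
    have := hsd.two_mul_finrank
    omega
  have hCP : C ≤ dualCode Cmax := fun x hx => dualCode_anti hCmaxC (le_of_eq hsd hx)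
  obtain ⟨y, hyP, hyC, hP⟩ := exists_eq_sup_span_singleton_sup (hCmaxC.trans hCP)
    (by rw [finrank_dualCode]; omega) (hCP hcC) hcCmax
  have hC : C = Cmax ⊔ ZMod 2 ∙ c :=
    eq_sup_span_singleton_of_finrank_le hCmaxC (by have := hsd.two_mul_finrank; omega) hcC hcCmax
  have h1 : (1 : Fin n → ZMod 2) ∈ Cmax :=
    (hmem 1).2 ⟨one_mem_of_isSelfDual hsd, by rw [wt_one]; omega⟩
  obtain ⟨hy4, hcy4⟩ := four_dvd_wt_of_dualCode_eq_sup_sup h8 hde h1 hP hc hcCmax hyC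
  have hyC' : y ∉ C := hC ▸ hyC
  have hyCmax : y ∉ Cmax := fun h => hyC' (hCmaxC h)
  have hcyCmax : c + y ∉ Cmax := fun h => hyC' (by simpa using C.sub_mem (hCmaxC h) hcC)
  have hcyP : c + y ∈ dualCode Cmax := add_mem (hCP hcC) hyP
  have hselfDual : ∀ v ∈ dualCode Cmax, v ∉ Cmax → IsSelfDual (Cmax ⊔ ZMod 2 ∙ v) :=
    fun v hv hvCmax => isSelfDual_sup_span_singleton (hCmaxC.trans hCP) hv
      (two_dvd_wt_of_mem_dualCode h1 hv) hvCmax hfin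
  refine ⟨Cmax ⊔ ZMod 2 ∙ y, Cmax ⊔ ZMod 2 ∙ (c + y),
    sup_span_singleton_ne hyCmax (by simpa using hcCmax),
    hselfDual y hyP hyCmax, doublyEven_sup_span_singleton hde hyP hy4, le_sup_left,
    hselfDual _ hcyP hcyCmax, doublyEven_sup_span_singleton hde hcyP hcy4, le_sup_left,
    fun D hD hDe hCmaxD => ?_,
    fun D hD hCmaxD => hC ▸ hD.eq_sup_span_singleton_of_le hCmaxD hfin hP,
    ?_, ?_, ?_⟩
  · rcases hD.eq_sup_span_singleton_of_le hCmaxD hfin hP with rfl | h | h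
    · exact absurd (hDe c (mem_sup_right (mem_span_singleton_self c))) hc
    · exact Or.inl h
    · exact Or.inr h
  · rw [hC, sup_span_singleton_inf_sup_span_singleton
      (fun h => hyC' (by simpa using C.sub_mem hcC (hCmaxC h))), hdim]
  · rw [hC, sup_span_singleton_inf_sup_span_singleton (by simpa using hyCmax), hdim]
  · rw [sup_span_singleton_inf_sup_span_singleton (by simpa using hcCmax), hdim]

theorem neighborhood_of_typeI {n : ℕ} (hn : 0 < n) (h8 : 8 ∣ n)
    (C Cmax : Submodule (ZMod 2) (Fin n → ZMod 2))
    (hsd : IsSelfDual C) (hse : SinglyEven C)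
    (hmax : (Cmax : Set (Fin n → ZMod 2)) = {c | c ∈ C ∧ 4 ∣ wt c})
    (hdim : Module.finrank (ZMod 2) Cmax = n / 2 - 1) :
    ∃ C2 C3 : Submodule (ZMod 2) (Fin n → ZMod 2),
      C2 ≠ C3 ∧
      IsSelfDual C2 ∧ DoublyEven C2 ∧ Cmax ≤ C2 ∧
      IsSelfDual C3 ∧ DoublyEven C3 ∧ Cmax ≤ C3 ∧
      (∀ D : Submodule (ZMod 2) (Fin n → ZMod 2),
        IsSelfDual D → DoublyEven D → Cmax ≤ D → D = C2 ∨ D = C3) ∧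
      (∀ D : Submodule (ZMod 2) (Fin n → ZMod 2),
        IsSelfDual D → Cmax ≤ D → D = C ∨ D = C2 ∨ D = C3) ∧
      Module.finrank (ZMod 2) ↥(C ⊓ C2) = n / 2 - 1 ∧
      Module.finrank (ZMod 2) ↥(C ⊓ C3) = n / 2 - 1 ∧
      Module.finrank (ZMod 2) ↥(C2 ⊓ C3) = n / 2 - 1 :=
  neighborhood_of_typeI_general h8 C Cmax hsd hse hmax hdim
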